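/- arXiv:2403.06854 — 4 statements merged into one kernel-verified Lean document; each statement's English description precedes it below -/
import Mathlib

section
/- Let X be a set with pseudometric d, Y a set, and f, g : X → Y. Suppose that for all x₁, x₂ ∈ X, f(x₁) = f(x₂) implies d(x₁, x₂) = 0. Then the following are equivalent: (1) [f(x₁) = g(x₂) implies d(x₁, x₂) ≤ ε for all x₁, x₂] together with [the image of g is contained in the image of f]; (2) there exists t : X → X such that g = f ∘ t and d(x, t(x)) ≤ ε for all x ∈ X. -/
/-- Abstract Theorem 3.1: necessary and sufficient conditions for ε-robustness. -/
theorem stmt_0 {X Y : Type*} (d : X → X → ℝ) (ε : ℝ) (hε : 0 ≤ ε)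
    (hnn : ∀ x y, 0 ≤ d x y) (hrefl : ∀ x, d x x = 0)
    (hsymm : ∀ x y, d x y = d y x) (htri : ∀ x y z, d x z ≤ d x y + d y z)
    (f g : X → Y)
    (hf : ∀ x₁ x₂, f x₁ = f x₂ → d x₁ x₂ = 0) :
    ((∀ x₁ x₂, f x₁ = g x₂ → d x₁ x₂ ≤ ε) ∧ Set.range g ⊆ Set.range f) ↔
      (∃ t : X → X, g = f ∘ t ∧ ∀ x, d x (t x) ≤ ε) := by
  constructor
  · rintro ⟨h1, h2⟩
    choose t ht using fun x => h2 (Set.mem_range_self (f := g) x)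
    refine ⟨t, funext fun x => (ht x).symm, fun x => (hsymm x (t x)) ▸ h1 (t x) x (ht x)⟩
  · rintro ⟨t, rfl, ht⟩
    refine ⟨fun x₁ x₂ h => ?_, Set.range_comp_subset_range t f⟩
    calc d x₁ x₂ ≤ d x₁ (t x₂) + d (t x₂) x₂ := htri _ _ _
      _ ≤ ε := by
        have h0 : d x₁ (t x₂) = 0 := hf _ _ h
        rw [h0, hsymm]
        simpa using ht x₂
end

section
/- Let X be a set with pseudometric d, Y a set with pseudometric d', and f : X → Y. Define: f is ε/δ-separating if for all x₁, x₂ ∈ X, d(x₁, x₂) > ε implies d'(f(x₁), f(x₂)) > δ. If f is ε/δ-separating, then for every function g : X → Y satisfying d'(f(x), g(x)) ≤ δ for all x, we have: f(x₁) = g(x₂) implies d(x₁, x₂) ≤ ε for all x₁, x₂ ∈ X. -/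
/-- One direction of Theorem 3.5: ε/δ-separating implies robustness to δ-perturbation. -/
theorem stmt_1 {X Y : Type*} (d : X → X → ℝ) (d' : Y → Y → ℝ) (ε δ : ℝ)
    (hε : 0 ≤ ε) (hδ : 0 ≤ δ)
    (hnn : ∀ x y, 0 ≤ d x y) (hrefl : ∀ x, d x x = 0)
    (hsymm : ∀ x y, d x y = d y x) (htri : ∀ x y z, d x z ≤ d x y + d y z)
    (hnn' : ∀ x y, 0 ≤ d' x y) (hrefl' : ∀ x, d' x x = 0)
    (hsymm' : ∀ x y, d' x y = d' y x) (htri' : ∀ x y z, d' x z ≤ d' x y + d' y z)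
    (f : X → Y)
    (hsep : ∀ x₁ x₂, ε < d x₁ x₂ → δ < d' (f x₁) (f x₂)) :
    ∀ g : X → Y, (∀ x, d' (f x) (g x) ≤ δ) →
      ∀ x₁ x₂, f x₁ = g x₂ → d x₁ x₂ ≤ ε := by
  intro g hg x₁ x₂ heq
  by_contra h
  push_neg at h
  have h1 := hsep x₁ x₂ h
  have h2 := hg x₂
  rw [hsymm' (f x₂) (g x₂), ← heq] at h2
  linarith
end

section
/- Let V be a finite-dimensional real inner product space, W ⊆ V a linear subspace, and P : V → V the orthogonal projection onto W. For any v ∈ V, let s(v) = P(v)/‖P(v)‖ if P(v) ≠ 0 and s(v) = P(v) = 0 otherwise. If v₁, v₂ ∈ V satisfy ‖P(v₁) - P(v₂)‖ ≤ ‖P(v₁)‖ · sin(2 · arcsin(ε/2)) for some ε with 0 ≤ ε ≤ √2, then ‖s(v₁) - s(v₂)‖ ≤ ε. -/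
open scoped Classical

open scoped RealInnerProductSpace

/-- Geometric lemma behind Proposition 3.2: a perturbation of size at most
`‖P v‖ · sin(2 arcsin(ε/2))` inside the projection changes the normalization
by at most ε. -/
theorem stmt_4 {V : Type*} [NormedAddCommGroup V] [InnerProductSpace ℝ V]
    [FiniteDimensional ℝ V] (W : Submodule ℝ V)
    (P : V → V) (hP : ∀ v, P v = (W.orthogonalProjectionOnto v : V))
    (s : V → V)
    (hs : ∀ v, s v = if P v = 0 then (0 : V) else ‖P v‖⁻¹ • P v)
    (ε : ℝ) (hε0 : 0 ≤ ε) (hε2 : ε ≤ Real.sqrt 2)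
    (v₁ v₂ : V)
    (h : ‖P v₁ - P v₂‖ ≤ ‖P v₁‖ * Real.sin (2 * Real.arcsin (ε / 2))) :
    ‖s v₁ - s v₂‖ ≤ ε := by
  have hε2' : ε ^ 2 ≤ 2 := by
    nlinarith [Real.sq_sqrt (by norm_num : (0:ℝ) ≤ 2), Real.sqrt_nonneg 2]
  have h1 : (0:ℝ) ≤ 1 - (ε/2)^2 := by nlinarith
  have hεle : ε / 2 ≤ 1 := by nlinarith
  have hεge : (-1:ℝ) ≤ ε / 2 := by linarith
  have hS : Real.sin (2 * Real.arcsin (ε/2)) = ε * Real.sqrt (1 - (ε/2)^2) := by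
    rw [Real.sin_two_mul, Real.sin_arcsin hεge hεle, Real.cos_arcsin]
    ring_nf
  have hS2 : (Real.sin (2 * Real.arcsin (ε/2)))^2 = ε^2 * (1 - (ε/2)^2) := by
    rw [hS, mul_pow, Real.sq_sqrt h1]
  have hSnn : 0 ≤ Real.sin (2 * Real.arcsin (ε/2)) := by
    rw [hS]; positivity
  set S := Real.sin (2 * Real.arcsin (ε/2)) with hSdef
  by_cases ha : P v₁ = 0
  · have hb : P v₂ = 0 := by
      rw [ha] at h
      simp only [zero_sub, norm_neg, norm_zero, zero_mul] at h
      exact norm_le_zero_iff.mp h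
    rw [hs, hs, if_pos ha, if_pos hb, sub_zero, norm_zero]
    exact hε0
  · by_cases hb : P v₂ = 0
    · have hA : 0 < ‖P v₁‖ := norm_pos_iff.mpr ha
      rw [hb, sub_zero] at h
      have hS1 : 1 ≤ S := by
        rcases le_or_gt 1 S with h' | h'
        · exact h'
        · exfalso; nlinarith
      have hε1 : 1 ≤ ε := by nlinarith
      have hunit : ‖‖P v₁‖⁻¹ • P v₁‖ = 1 := by
        rw [norm_smul, Real.norm_eq_abs, abs_inv, abs_norm, inv_mul_cancel₀ hA.ne']
      rw [hs, hs, if_neg ha, if_pos hb, sub_zero, hunit]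
      exact hε1
    · have hA : 0 < ‖P v₁‖ := norm_pos_iff.mpr ha
      have hB : 0 < ‖P v₂‖ := norm_pos_iff.mpr hb
      set a := P v₁
      set b := P v₂
      have hab2 : ‖a - b‖^2 ≤ ‖a‖^2 * S^2 := by
        have := mul_self_le_mul_self (norm_nonneg (a - b)) h
        nlinarith
      have hexp : ‖a - b‖^2 = ‖a‖^2 - 2*⟪a,b⟫ + ‖b‖^2 := norm_sub_sq_real a b
      have key : ‖a‖*‖b‖*(1 - ε^2/2) ≤ ⟪a,b⟫ := by
        nlinarith [sq_nonneg (‖a‖*(1-ε^2/2) - ‖b‖)]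
      have hAB : (0:ℝ) < ‖a‖ * ‖b‖ := mul_pos hA hB
      have hq : 1 - ε^2/2 ≤ ‖a‖⁻¹ * ‖b‖⁻¹ * ⟪a,b⟫ := by
        rw [← mul_le_mul_iff_of_pos_right hAB]
        have heq : ‖a‖⁻¹ * ‖b‖⁻¹ * ⟪a,b⟫ * (‖a‖ * ‖b‖) = ⟪a,b⟫ := by
          field_simp
        rw [heq]
        nlinarith [key]
      rw [hs, hs, if_neg ha, if_neg hb]
      have hua : ‖‖a‖⁻¹ • a‖ = 1 := by
        rw [norm_smul, Real.norm_eq_abs, abs_inv, abs_norm, inv_mul_cancel₀ hA.ne']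
      have hub : ‖‖b‖⁻¹ • b‖ = 1 := by
        rw [norm_smul, Real.norm_eq_abs, abs_inv, abs_norm, inv_mul_cancel₀ hB.ne']
      have hgoal2 : ‖‖a‖⁻¹ • a - ‖b‖⁻¹ • b‖^2
          = 2 - 2 * (‖a‖⁻¹ * ‖b‖⁻¹ * ⟪a,b⟫) := by
        rw [norm_sub_sq_real, real_inner_smul_left, real_inner_smul_right,
          hua, hub]
        ring
      nlinarith [norm_nonneg (‖a‖⁻¹ • a - ‖b‖⁻¹ • b)]
end

section
/- Let V = ℝⁿ with the Euclidean norm, let D(v₁, v₂) = 0.5·‖s(v₁) - s(v₂)‖ with s the normalization map (s(0) = 0), let Y be a metric space, and let f : V → Y be continuous (with respect to the Euclidean topology on V). Then for every ε < 1 and every δ > 0, f is not ε/δ-separating with respect to (D, d_Y): there exist v₁, v₂ ∈ V with D(v₁, v₂) > ε but d_Y(f(v₁), f(v₂)) ≤ δ. -/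
open scoped Classical

/-- Simplified Theorem 3.6: no continuous map from ℝⁿ is ε/δ-separating with
respect to the normalized (STARC-style) pseudometric. -/
theorem stmt_9 {n : ℕ} (hn : 0 < n) {Y : Type*} [MetricSpace Y]
    (s : EuclideanSpace ℝ (Fin n) → EuclideanSpace ℝ (Fin n))
    (hs : ∀ v, s v = if v = 0 then 0 else ‖v‖⁻¹ • v)
    (D : EuclideanSpace ℝ (Fin n) → EuclideanSpace ℝ (Fin n) → ℝ)
    (hD : ∀ v₁ v₂, D v₁ v₂ = 0.5 * ‖s v₁ - s v₂‖)
    (f : EuclideanSpace ℝ (Fin n) → Y) (hf : Continuous f)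
    (ε δ : ℝ) (hε : ε < 1) (hδ : 0 < δ) :
    ∃ v₁ v₂, ε < D v₁ v₂ ∧ dist (f v₁) (f v₂) ≤ δ := by
  -- unit vector
  set u : EuclideanSpace ℝ (Fin n) := EuclideanSpace.single ⟨0, hn⟩ 1 with hu
  have hnu : ‖u‖ = 1 := by
    simp [hu, EuclideanSpace.norm_single]
  -- continuity of t ↦ f (t • u) at 0
  have hg : ContinuousAt (fun t : ℝ => f (t • u)) 0 :=
    (hf.comp (continuous_id.smul continuous_const)).continuousAt
  have hh : ContinuousAt (fun t : ℝ => f ((-t) • u)) 0 :=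
    (hf.comp ((continuous_neg).smul continuous_const)).continuousAt
  rw [Metric.continuousAt_iff] at hg hh
  obtain ⟨η₁, hη₁, H₁⟩ := hg (δ/2) (by linarith)
  obtain ⟨η₂, hη₂, H₂⟩ := hh (δ/2) (by linarith)
  set t : ℝ := min η₁ η₂ / 2 with ht
  have ht0 : 0 < t := by positivity
  have ht1 : |t - 0| < η₁ := by
    rw [sub_zero, abs_of_pos ht0]
    calc t < min η₁ η₂ := by rw [ht]; linarith [lt_min hη₁ hη₂]
    _ ≤ η₁ := min_le_left _ _
  have ht2 : |t - 0| < η₂ := by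
    rw [sub_zero, abs_of_pos ht0]
    calc t < min η₁ η₂ := by rw [ht]; linarith [lt_min hη₁ hη₂]
    _ ≤ η₂ := min_le_right _ _
  have d1 := H₁ ht1
  have d2 := H₂ ht2
  simp only [zero_smul, neg_zero] at d1 d2
  refine ⟨t • u, (-t) • u, ?_, ?_⟩
  · -- compute s (t • u) = u, s ((-t) • u) = -u
    have hu0 : u ≠ 0 := by
      intro h; rw [h, norm_zero] at hnu; norm_num at hnu
    have hne : (t • u : EuclideanSpace ℝ (Fin n)) ≠ 0 :=
      smul_ne_zero (ne_of_gt ht0) hu0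
    have hne' : ((-t) • u : EuclideanSpace ℝ (Fin n)) ≠ 0 :=
      smul_ne_zero (by simpa using ne_of_gt ht0) hu0
    have hs1 : s (t • u) = u := by
      rw [hs, if_neg hne, norm_smul, hnu, Real.norm_eq_abs, abs_of_pos ht0,
        mul_one, smul_smul, inv_mul_cancel₀ (ne_of_gt ht0), one_smul]
    have hs2 : s ((-t) • u) = -u := by
      rw [hs, if_neg hne', norm_smul, hnu, Real.norm_eq_abs, abs_neg,
        abs_of_pos ht0, mul_one, smul_smul]
      rw [show t⁻¹ * (-t) = -1 by field_simp, neg_one_smul]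
    rw [hD, hs1, hs2, sub_neg_eq_add]
    have : ‖u + u‖ = 2 := by
      rw [show u + u = (2:ℝ) • u by module, norm_smul, hnu]
      norm_num
    rw [this]; norm_num; linarith
  · calc dist (f (t • u)) (f ((-t) • u))
        ≤ dist (f (t • u)) (f 0) + dist (f 0) (f ((-t) • u)) := dist_triangle _ _ _
    _ ≤ δ/2 + δ/2 := by
        have := dist_comm (f 0) (f ((-t) • u))
        linarith [le_of_lt d1, le_of_lt d2, this ▸ le_of_lt d2]
    _ = δ := by ring
end
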